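/- arXiv:2405.18243 — 4 statements merged into one kernel-verified Lean document; each statement's English description precedes it below -/
import Mathlib

section
/- A linear map d on the compatible associative algebra (A₂², A₂³) is a derivation (with respect to both multiplications) if and only if its matrix in the basis {e₁, e₂} has the form [[0, 0], [d₁², d₂²]] for some d₁², d₂² ∈ ℂ. -/
/-- Multiplication of A₂² : e₁e₁ = e₁, e₁e₂ = e₂. -/
def mulA22 (u v : Fin 2 → ℂ) : Fin 2 → ℂ := ![u 0 * v 0, u 0 * v 1]

/-- Multiplication of A₂³ : e₁e₁ = e₁, e₂e₁ = e₂. -/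
def mulA23 (u v : Fin 2 → ℂ) : Fin 2 → ℂ := ![u 0 * v 0, u 1 * v 0]

lemma decomp (w : Fin 2 → ℂ) : w = w 0 • ![(1:ℂ), 0] + w 1 • ![(0:ℂ), 1] := by
  funext i; fin_cases i <;> simp

/-- derivations of (A₂², A₂³) are exactly the maps with matrix
[[0,0],[d₁², d₂²]] in the basis {e₁, e₂}. -/
theorem stmt_5 (d : (Fin 2 → ℂ) →ₗ[ℂ] (Fin 2 → ℂ)) :
    (∀ u v : Fin 2 → ℂ,
      (d (mulA22 u v) = mulA22 (d u) v + mulA22 u (d v)) ∧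
      (d (mulA23 u v) = mulA23 (d u) v + mulA23 u (d v))) ↔
    ∃ a b : ℂ, d ![1, 0] = a • ![(0 : ℂ), 1] ∧ d ![0, 1] = b • ![(0 : ℂ), 1] := by
  constructor
  · intro h
    refine ⟨d ![1, 0] 1, d ![0, 1] 1, ?_, ?_⟩
    · have h1 := (h ![1, 0] ![1, 0]).1
      have key : mulA22 ![(1:ℂ), 0] ![(1:ℂ), 0] = ![1, 0] := by
        funext i; fin_cases i <;> simp [mulA22]
      rw [key] at h1
      have h0 : d ![(1:ℂ), 0] 0 = 0 := by
        simpa [mulA22] using congrFun h1 0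
      funext i; fin_cases i <;> simp [h0]
    · have h2 := (h ![1, 0] ![0, 1]).2
      have key : mulA23 ![(1:ℂ), 0] ![(0:ℂ), 1] = 0 := by
        funext i; fin_cases i <;> simp [mulA23]
      rw [key, map_zero] at h2
      have h0 : d ![(0:ℂ), 1] 0 = 0 := by
        simpa [mulA23] using congrFun h2.symm 0
      funext i; fin_cases i <;> simp [h0]
  · rintro ⟨a, b, ha, hb⟩
    have hd : ∀ w : Fin 2 → ℂ, d w = ![0, w 0 * a + w 1 * b] := by
      intro w
      conv_lhs => rw [decomp w]
      rw [map_add, map_smul, map_smul, ha, hb]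
      funext i; fin_cases i <;> simp <;> ring
    intro u v
    constructor <;>
    · funext i
      simp only [hd, mulA22, mulA23, Pi.add_apply]
      fin_cases i <;> simp [mulA22, mulA23] <;> ring
end

section
/- A linear map d on the compatible associative algebra (A₂², A₂⁴) is a derivation if and only if d(e₁) = 0 and d(e₂) = c·e₂ for some c ∈ ℂ. -/
/-- Multiplication of A₂⁴ : e₁e₁ = e₁, e₁e₂ = e₂, e₂e₁ = e₂. -/
def mulA24 (u v : Fin 2 → ℂ) : Fin 2 → ℂ := ![u 0 * v 0, u 0 * v 1 + u 1 * v 0]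

/-- derivations of (A₂², A₂⁴) are exactly the maps with
d(e₁) = 0 and d(e₂) = c·e₂. -/
theorem stmt_6 (d : (Fin 2 → ℂ) →ₗ[ℂ] (Fin 2 → ℂ)) :
    (∀ u v : Fin 2 → ℂ,
      (d (mulA22 u v) = mulA22 (d u) v + mulA22 u (d v)) ∧
      (d (mulA24 u v) = mulA24 (d u) v + mulA24 u (d v))) ↔
    (d ![1, 0] = 0 ∧ ∃ c : ℂ, d ![0, 1] = c • ![(0 : ℂ), 1]) := by
  constructor
  · intro h
    have h11 := (h ![1,0] ![1,0]).2
    have h22 := (h ![0,1] ![0,1]).1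
    have e11 : mulA24 ![(1:ℂ),0] ![1,0] = ![1,0] := by
      funext i; fin_cases i <;> simp [mulA24]
    have e22 : mulA22 ![(0:ℂ),1] ![0,1] = 0 := by
      funext i; fin_cases i <;> simp [mulA22]
    rw [e11] at h11
    rw [e22, map_zero] at h22
    have h110 := congrFun h11 0
    have h111 := congrFun h11 1
    have h221 := congrFun h22.symm 1
    simp [mulA24, mulA22] at h110 h111 h221
    have he1 : d ![(1:ℂ),0] = 0 := by
      funext i; fin_cases i <;> simp [h110, h111]
    refine ⟨he1, d ![0,1] 1, ?_⟩
    funext i; fin_cases i <;> simp [h221]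
  · rintro ⟨h1, c, h2⟩
    have key : ∀ u : Fin 2 → ℂ, d u = ![0, c * u 1] := by
      intro u
      have hu : u = u 0 • ![(1:ℂ),0] + u 1 • ![(0:ℂ),1] := by
        funext i; fin_cases i <;> simp
      rw [hu, map_add, map_smul, map_smul, h1, h2]
      funext i; fin_cases i <;> simp <;> ring
    intro u v
    constructor <;>
    · funext i
      fin_cases i <;> simp [key, mulA22, mulA24] <;> ring
end

section
/- A linear map R on the compatible associative algebra (A₂², A₂⁴) satisfying the Rota-Baxter identity for both multiplications must have the form R(e₁) = c·e₂ and R(e₂) = 0 for some c ∈ ℂ, and conversely every such map is a Rota-Baxter operator. -/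
lemma Rdecomp (R : (Fin 2 → ℂ) →ₗ[ℂ] (Fin 2 → ℂ)) (u : Fin 2 → ℂ) :
    R u = u 0 • R ![1, 0] + u 1 • R ![0, 1] := by
  have h : u = u 0 • ![(1:ℂ), 0] + u 1 • ![(0:ℂ), 1] := by
    ext i; fin_cases i <;> simp
  calc R u = R (u 0 • ![(1:ℂ), 0] + u 1 • ![(0:ℂ), 1]) := by rw [← h]
    _ = u 0 • R ![1, 0] + u 1 • R ![0, 1] := by
        rw [map_add, map_smul, map_smul]

/-- Rota-Baxter operators on (A₂², A₂⁴) are exactly the maps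
R(e₁) = c·e₂, R(e₂) = 0. -/
theorem stmt_9 (R : (Fin 2 → ℂ) →ₗ[ℂ] (Fin 2 → ℂ)) :
    (∀ u v : Fin 2 → ℂ,
      (mulA22 (R u) (R v) = R (mulA22 (R u) v + mulA22 u (R v))) ∧
      (mulA24 (R u) (R v) = R (mulA24 (R u) v + mulA24 u (R v)))) ↔
    ∃ c : ℂ, R ![1, 0] = c • ![(0 : ℂ), 1] ∧ R ![0, 1] = 0 := by
  constructor
  · intro h
    set a := R ![(1:ℂ), 0] 0 with ha
    set b := R ![(1:ℂ), 0] 1 with hb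
    set c := R ![(0:ℂ), 1] 0 with hc
    set d := R ![(0:ℂ), 1] 1 with hd
    have Rw : ∀ w : Fin 2 → ℂ, R w = ![w 0 * a + w 1 * c, w 0 * b + w 1 * d] := by
      intro w
      rw [Rdecomp R w]
      ext i; fin_cases i <;>
        simp [ha, hb, hc, hd, mul_comm]
    -- equations from basis pairs
    have h11 := (h ![1,0] ![1,0]).1
    have h12 := (h ![1,0] ![1,0]).2
    have h21 := (h ![1,0] ![0,1]).2
    have h22 := (h ![0,1] ![0,1]).2
    have e1 : a ^ 2 + b * c = 0 := by
      have := congrFun h11 0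
      simp only [mulA22, Rw, Pi.add_apply, Pi.smul_apply, smul_eq_mul,
        Matrix.cons_val_zero, Matrix.cons_val_one, Matrix.head_cons] at this
      linear_combination -this
    have e2 : a ^ 2 + 2 * (b * c) = 0 := by
      have := congrFun h12 0
      simp only [mulA24, Rw, Pi.add_apply, Pi.smul_apply, smul_eq_mul,
        Matrix.cons_val_zero, Matrix.cons_val_one, Matrix.head_cons] at this
      linear_combination -this
    have hbc : b * c = 0 := by linear_combination e2 - e1
    have ha0 : a = 0 := by
      have : a ^ 2 = 0 := by linear_combination e1 - hbc
      exact pow_eq_zero_iff (n := 2) (by norm_num) |>.mp this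
    have ed : d ^ 2 = 0 := by
      have := congrFun h21 1
      simp only [mulA24, Rw, Pi.add_apply, Pi.smul_apply, smul_eq_mul,
        Matrix.cons_val_zero, Matrix.cons_val_one, Matrix.head_cons] at this
      linear_combination -this
    have hd0 : d = 0 := pow_eq_zero_iff (n := 2) (by norm_num) |>.mp ed
    have hc0 : c = 0 := by
      have ec : c ^ 2 = 0 := by
        have := congrFun h22 0
        simp only [mulA24, Rw, Pi.add_apply, Pi.smul_apply, smul_eq_mul,
          Matrix.cons_val_zero, Matrix.cons_val_one, Matrix.head_cons] at this
        linear_combination -this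
      exact pow_eq_zero_iff (n := 2) (by norm_num) |>.mp ec
    refine ⟨b, ?_, ?_⟩
    · ext i; fin_cases i <;> simp [← ha, ← hb, ha0]
    · ext i; fin_cases i <;> simp [← hc, ← hd, hc0, hd0]
  · rintro ⟨c, h1, h2⟩
    intro u v
    constructor <;>
    · ext i
      have Rw : ∀ w : Fin 2 → ℂ, R w = ![(0:ℂ), w 0 * c] := by
        intro w
        rw [Rdecomp R w, h1, h2]
        ext j; fin_cases j <;> simp [mul_comm]
      simp only [mulA22, mulA24, Rw, Pi.add_apply,
        Matrix.cons_val_zero, Matrix.cons_val_one, Matrix.head_cons]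
      fin_cases i <;> simp
end

section
/- For the 3-dimensional pair (A₃³, A₃¹¹), every automorphism of the compatible associative algebra is the identity map. -/
/-- Multiplication of A₃³ : e₁e₁ = e₂, e₁e₂ = e₃, e₂e₁ = e₃. -/
def mulA33 (u v : Fin 3 → ℂ) : Fin 3 → ℂ := ![0, u 0 * v 0, u 0 * v 1 + u 1 * v 0]

/-- Multiplication of A₃¹¹ : e₁e₃ = e₂, e₂e₃ = e₂, e₃e₁ = e₂, e₃e₂ = e₂,
e₃e₃ = e₃. -/
def mulA311 (u v : Fin 3 → ℂ) : Fin 3 → ℂ :=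
  ![0, u 0 * v 2 + u 1 * v 2 + u 2 * v 0 + u 2 * v 1, u 2 * v 2]

/-- every automorphism of the compatible associative algebra
(A₃³, A₃¹¹) is the identity map. -/
theorem stmt_19 (θ : (Fin 3 → ℂ) →ₗ[ℂ] (Fin 3 → ℂ))
    (hbij : Function.Bijective θ)
    (hmul : ∀ u v : Fin 3 → ℂ,
      (θ (mulA33 u v) = mulA33 (θ u) (θ v)) ∧
      (θ (mulA311 u v) = mulA311 (θ u) (θ v))) :
    θ = LinearMap.id := by
  set a := θ ![1,0,0] with ha
  set b := θ ![0,1,0] with hb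
  set c := θ ![0,0,1] with hc
  -- products among basis vectors
  have m33_11 : mulA33 ![1,0,0] ![1,0,0] = ![0,1,0] := by
    funext i; fin_cases i <;> simp [mulA33]
  have m311_11 : mulA311 ![1,0,0] ![1,0,0] = 0 := by
    funext i; fin_cases i <;> simp [mulA311]
  have m33_12 : mulA33 ![1,0,0] ![0,1,0] = ![0,0,1] := by
    funext i; fin_cases i <;> simp [mulA33]
  have m311_33 : mulA311 ![0,0,1] ![0,0,1] = ![0,0,1] := by
    funext i; fin_cases i <;> simp [mulA311]
  have m311_13 : mulA311 ![1,0,0] ![0,0,1] = ![0,1,0] := by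
    funext i; fin_cases i <;> simp [mulA311]
  -- equations
  have hB : b = mulA33 a a := by
    have := (hmul ![1,0,0] ![1,0,0]).1; rw [m33_11] at this; exact this
  have hZ : (0 : Fin 3 → ℂ) = mulA311 a a := by
    have := (hmul ![1,0,0] ![1,0,0]).2; rw [m311_11, map_zero] at this; rw [this]
  have hC : c = mulA33 a b := by
    have := (hmul ![1,0,0] ![0,1,0]).1; rw [m33_12] at this; exact this
  have hCC : c = mulA311 c c := by
    have := (hmul ![0,0,1] ![0,0,1]).2; rw [m311_33] at this; exact this
  have hB2 : b = mulA311 a c := by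
    have := (hmul ![1,0,0] ![0,0,1]).2; rw [m311_13] at this; exact this
  -- scalar equations
  have a2 : a 2 = 0 := by
    have := congrFun hZ 2
    simp [mulA311] at this
    exact this
  have b0 : b 0 = 0 := by have := congrFun hB 0; simpa [mulA33] using this
  have b1 : b 1 = a 0 * a 0 := by have := congrFun hB 1; simpa [mulA33] using this
  have b2 : b 2 = a 0 * a 1 + a 1 * a 0 := by
    have := congrFun hB 2; simpa [mulA33] using this
  have c0 : c 0 = 0 := by have := congrFun hC 0; simpa [mulA33] using this
  have c1 : c 1 = a 0 * b 0 := by have := congrFun hC 1; simpa [mulA33] using this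
  have c2 : c 2 = a 0 * b 1 + a 1 * b 0 := by
    have := congrFun hC 2; simpa [mulA33] using this
  have hc2sq : c 2 = c 2 * c 2 := by
    have := congrFun hCC 2; simpa [mulA311] using this
  have hb1' : b 1 = a 0 * c 2 + a 1 * c 2 + a 2 * c 0 + a 2 * c 1 := by
    have := congrFun hB2 1; simpa [mulA311] using this
  have hb2' : b 2 = a 2 * c 2 := by
    have := congrFun hB2 2; simpa [mulA311] using this
  -- a 0 ≠ 0
  have ha0 : a 0 ≠ 0 := by
    intro h0
    have hb0 : b = 0 := by
      funext i; fin_cases i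
      · show b 0 = 0; exact b0
      · show b 1 = 0; rw [b1, h0]; ring
      · show b 2 = 0; rw [b2, h0]; ring
    have : (![0,1,0] : Fin 3 → ℂ) = 0 := by
      apply hbij.1
      rw [← hb, hb0, map_zero]
    have := congrFun this 1
    simp at this
  -- solve
  have hc2 : c 2 = a 0 * (a 0 * a 0) := by rw [c2, b1, b0]; ring
  have hc2ne : c 2 ≠ 0 := by
    rw [hc2]; exact mul_ne_zero ha0 (mul_ne_zero ha0 ha0)
  have hc2one : c 2 = 1 := by
    have h : c 2 * (c 2 - 1) = 0 := by linear_combination -hc2sq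
    rcases mul_eq_zero.mp h with h | h
    · exact absurd h hc2ne
    · linear_combination h
  have a1 : a 1 = 0 := by
    have : a 0 * a 1 + a 1 * a 0 = a 2 * c 2 := by rw [← b2, hb2']
    rw [a2, zero_mul] at this
    have h2 : a 0 * a 1 = 0 := by linear_combination this / 2
    rcases mul_eq_zero.mp h2 with h | h
    · exact absurd h ha0
    · exact h
  have a0 : a 0 = 1 := by
    have : a 0 * a 0 = a 0 := by
      rw [← b1, hb1', a1, a2, hc2one]; ring
    have h2 : a 0 * (a 0 - 1) = 0 := by linear_combination this
    rcases mul_eq_zero.mp h2 with h | h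
    · exact absurd h ha0
    · linear_combination h
  have hb1v : b 1 = 1 := by rw [b1, a0]; ring
  have hb2v : b 2 = 0 := by rw [b2, a1]; ring
  have hc1v : c 1 = 0 := by rw [c1, b0]; ring
  -- conclude
  apply LinearMap.ext
  intro u
  have hu : u = u 0 • ![1,0,0] + u 1 • ![0,1,0] + u 2 • ![0,0,1] := by
    funext i; fin_cases i <;> simp
  rw [LinearMap.id_apply]
  conv_lhs => rw [hu]
  rw [map_add, map_add, map_smul, map_smul, map_smul, ← ha, ← hb, ← hc]
  funext i
  fin_cases i <;>
    simp [a0, a1, a2, b0, hb1v, hb2v, c0, hc1v, hc2one]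
end
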